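/- arXiv:1803.07604 — 9 statements merged into one kernel-verified Lean document; each statement's English description precedes it below -/
import Mathlib

section
/- Let X be a quandle, A an abelian group with automorphism T (viewed as the Alexander quandle a*b = T(a)+b-T(b)), and ψ : X × X → A a twisted quandle 2-cocycle with ψ(x,x) = 0 for all x. Then the operation (x,a) * (y,b) = (x*y, T(a) + b - T(b) + ψ(x,y)) defines a quandle structure on X × A. -/
/-- If `X` is a quandle, `A` an abelian group with automorphism `T`,
and `ψ` a twisted 2-cocycle with `ψ(x,x) = 0`, then
`(x,a) * (y,b) = (x*y, T a + b - T b + ψ(x,y))` is a quandle structure on `X × A`. -/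
theorem abelian_extension_is_quandle
    (X A : Type*) [AddCommGroup A]
    (op : X → X → X)
    (hidem : ∀ x, op x x = x)
    (hdist : ∀ x y z, op (op x y) z = op (op x z) (op y z))
    (hbij : ∀ y, Function.Bijective fun x => op x y)
    (T : A ≃+ A) (ψ : X → X → A)
    (hψdiag : ∀ x, ψ x x = 0)
    (hψ : ∀ x₁ x₂ x₃ : X,
      T (ψ x₁ x₂) + ψ (op x₁ x₂) x₃ =
        T (ψ x₁ x₃) + (ψ x₂ x₃ - T (ψ x₂ x₃)) + ψ (op x₁ x₃) (op x₂ x₃))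
    (Op : X × A → X × A → X × A)
    (hOp : ∀ p q : X × A,
      Op p q = (op p.1 q.1, T p.2 + (q.2 - T q.2) + ψ p.1 q.1)) :
    (∀ p, Op p p = p) ∧
    (∀ p q r, Op (Op p q) r = Op (Op p r) (Op q r)) ∧
    (∀ q, Function.Bijective fun p => Op p q) := by
  refine ⟨?_, ?_, ?_⟩
  · intro p
    rw [hOp, hψdiag]
    ext <;> simp [hidem]
  · intro p q r
    simp only [hOp]
    have h := hψ p.1 q.1 r.1
    have h' : ψ (op p.1 q.1) r.1 =
        T (ψ p.1 r.1) + (ψ q.1 r.1 - T (ψ q.1 r.1)) + ψ (op p.1 r.1) (op q.1 r.1)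
          - T (ψ p.1 q.1) := by rw [← h]; abel
    ext
    · exact hdist p.1 q.1 r.1
    · simp only [map_add, map_sub, h']
      abel
  · intro q
    rw [Function.bijective_iff_has_inverse]
    set e : X ≃ X := Equiv.ofBijective _ (hbij q.1) with he
    refine ⟨fun r => (e.symm r.1, T.symm (r.2 - ψ (e.symm r.1) q.1 - (q.2 - T q.2))), ?_, ?_⟩
    · intro p
      simp only [hOp]
      have h1 : e.symm (op p.1 q.1) = p.1 := e.symm_apply_apply p.1
      ext
      · exact h1
      · simp only [h1]
        rw [show T p.2 + (q.2 - T q.2) + ψ p.1 q.1 - ψ p.1 q.1 - (q.2 - T q.2) = T p.2 by abel,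
          T.symm_apply_apply]
    · intro r
      simp only [hOp]
      have h1 : op (e.symm r.1) q.1 = r.1 := e.apply_symm_apply r.1
      ext
      · exact h1
      · simp only [T.apply_symm_apply]
        abel
end

section
/- Let X be a quandle, (A, T) an Alexander quandle, and ψ, φ two twisted quandle 2-cocycles on X with values in A that differ by the coboundary of a 1-cochain g : X → A, with the sign convention δg = ψ − φ. Then the map f(x,a) = (x, a + g(x)) is a quandle isomorphism from the extension X ×_ψ A to X ×_φ A commuting with the projections to X. -/
/-- If two twisted 2-cocycles `ψ, φ` on a quandle `X` with values in the
Alexander quandle `(A,T)` differ by the coboundary of `g : X → A`, then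
`f(x,a) = (x, a + g x)` is an isomorphism of extensions `X ×_ψ A → X ×_φ A`
commuting with the projections to `X`. -/
theorem cohomologous_cocycles_give_isomorphic_extensions
    (X A : Type*) [AddCommGroup A]
    (op : X → X → X)
    (hidem : ∀ x, op x x = x)
    (hdist : ∀ x y z, op (op x y) z = op (op x z) (op y z))
    (hbij : ∀ y, Function.Bijective fun x => op x y)
    (T : A ≃+ A) (ψ φ : X → X → A)
    (hψdiag : ∀ x, ψ x x = 0) (hφdiag : ∀ x, φ x x = 0)
    (hψ : ∀ x₁ x₂ x₃ : X,
      T (ψ x₁ x₂) + ψ (op x₁ x₂) x₃ =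
        T (ψ x₁ x₃) + (ψ x₂ x₃ - T (ψ x₂ x₃)) + ψ (op x₁ x₃) (op x₂ x₃))
    (hφ : ∀ x₁ x₂ x₃ : X,
      T (φ x₁ x₂) + φ (op x₁ x₂) x₃ =
        T (φ x₁ x₃) + (φ x₂ x₃ - T (φ x₂ x₃)) + φ (op x₁ x₃) (op x₂ x₃))
    (g : X → A)
    -- `ψ - φ = δg`
    (hg : ∀ x y, ψ x y - φ x y = T (g x) + (g y - T (g y)) - g (op x y))
    -- the extension quandle operations
    (Opψ Opφ : X × A → X × A → X × A)
    (hOpψ : ∀ p q, Opψ p q = (op p.1 q.1, T p.2 + (q.2 - T q.2) + ψ p.1 q.1))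
    (hOpφ : ∀ p q, Opφ p q = (op p.1 q.1, T p.2 + (q.2 - T q.2) + φ p.1 q.1))
    (f : X × A → X × A) (hf : ∀ p : X × A, f p = (p.1, p.2 + g p.1)) :
    Function.Bijective f ∧
    (∀ p q : X × A, f (Opψ p q) = Opφ (f p) (f q)) ∧
    (∀ p : X × A, (f p).1 = p.1) := by
  refine ⟨?_, ?_, ?_⟩
  · constructor
    · intro p q hpq
      rw [hf, hf] at hpq
      obtain ⟨h1, h2⟩ := Prod.mk.injEq .. ▸ hpq
      exact Prod.ext h1 (by rw [h1] at h2; exact add_right_cancel h2)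
    · intro p
      exact ⟨(p.1, p.2 - g p.1), by rw [hf]; simp⟩
  · intro p q
    rw [hOpψ, hf, hf, hf, hOpφ]
    refine Prod.ext rfl ?_
    have := hg p.1 q.1
    simp only [map_add]
    have h := sub_eq_iff_eq_add.mp this
    linear_combination (norm := abel) h
  · intro p; rw [hf]
end

section
/- Let X be a quandle, (A,T) an Alexander quandle, and suppose f : X ×_ψ A → X ×_φ A is a quandle isomorphism over X of the form f(x,a) = (x, a + g(x)) for some g : X → A. Then ψ and φ are cohomologous: ψ − φ = δg, i.e., ψ(x,y) − φ(x,y) = g(x*y) − T(g(x)) − (1−T)(g(y)) for all x,y ∈ X (up to fixed sign conventions). -/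
/-- Conversely, if `f(x,a) = (x, a + g x)` is a quandle isomorphism over
`X` from the extension `X ×_ψ A` to `X ×_φ A`, then `ψ` and `φ` are cohomologous:
`ψ(x,y) - φ(x,y) = δg(x,y)` for all `x, y` (with the fixed sign convention
`δg(x,y) = T(g x) + (1−T)(g y) − g(x*y)`). -/
theorem isomorphic_extensions_give_cohomologous_cocycles
    (X A : Type*) [AddCommGroup A]
    (op : X → X → X)
    (hidem : ∀ x, op x x = x)
    (hdist : ∀ x y z, op (op x y) z = op (op x z) (op y z))
    (hbij : ∀ y, Function.Bijective fun x => op x y)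
    (T : A ≃+ A) (ψ φ : X → X → A)
    (hψdiag : ∀ x, ψ x x = 0) (hφdiag : ∀ x, φ x x = 0)
    -- the extension quandle operations
    (Opψ Opφ : X × A → X × A → X × A)
    (hOpψ : ∀ p q, Opψ p q = (op p.1 q.1, T p.2 + (q.2 - T q.2) + ψ p.1 q.1))
    (hOpφ : ∀ p q, Opφ p q = (op p.1 q.1, T p.2 + (q.2 - T q.2) + φ p.1 q.1))
    (g : X → A)
    (f : X × A → X × A) (hf : ∀ p : X × A, f p = (p.1, p.2 + g p.1))
    (hfbij : Function.Bijective f)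
    (hfhom : ∀ p q : X × A, f (Opψ p q) = Opφ (f p) (f q)) :
    ∀ x y : X, ψ x y - φ x y = T (g x) + (g y - T (g y)) - g (op x y) := by
  intro x y
  have h := hfhom (x, 0) (y, 0)
  simp only [hOpψ, hOpφ, hf] at h
  have h2 := congrArg Prod.snd h
  simp at h2
  rw [eq_sub_iff_add_eq, sub_add_eq_add_sub, sub_eq_iff_eq_add, h2]
end

section
/- Let G be an abelian group with the quandle structure on G^m given by (a₁,…,a_m)*(b₁,…,b_m) = (a₁, a₂+b₁−a₁, …, a_m+b_{m−1}−a_{m−1}). Define φ : G^m × G^m → G by φ((a₁,…,a_m),(b₁,…,b_m)) = b_m − a_m. Then φ is an untwisted quandle 2-cocycle: φ(x,x) = 0 and φ(x₁,x₂) + φ(x₁*x₂, x₃) = φ(x₁,x₃) + φ(x₁*x₃, x₂*x₃) for all x₁,x₂,x₃ ∈ G^m. -/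
/-- On the quandle `G^m` with operation
`(a₁,…,a_m)*(b₁,…,b_m) = (a₁, a₂+b₁−a₁, …, a_m+b_{m−1}−a_{m−1})`, the map
`φ(a,b) = b_m − a_m` is an untwisted quandle 2-cocycle. -/
theorem last_coordinate_two_cocycle
    (G : Type*) [AddCommGroup G] (m : ℕ) (hm : 0 < m)
    (op : (Fin m → G) → (Fin m → G) → (Fin m → G))
    (hop : ∀ (a b : Fin m → G) (i : Fin m),
      op a b i =
        if (i : ℕ) = 0 then a i
        else a i + b ⟨(i : ℕ) - 1, Nat.lt_of_le_of_lt (Nat.sub_le _ _) i.isLt⟩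
              - a ⟨(i : ℕ) - 1, Nat.lt_of_le_of_lt (Nat.sub_le _ _) i.isLt⟩)
    (φ : (Fin m → G) → (Fin m → G) → G)
    (hφ : ∀ a b : Fin m → G,
      φ a b = b ⟨m - 1, Nat.sub_lt hm one_pos⟩ - a ⟨m - 1, Nat.sub_lt hm one_pos⟩) :
    (∀ x, φ x x = 0) ∧
    (∀ x₁ x₂ x₃, φ x₁ x₂ + φ (op x₁ x₂) x₃ =
      φ x₁ x₃ + φ (op x₁ x₃) (op x₂ x₃)) := by
  constructor
  · intro x; rw [hφ]; abel
  · intro x₁ x₂ x₃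
    simp only [hφ, hop]
    split <;> abel
end

section
/- Let S ∈ GL_n(ℝ), T ∈ GL_m(ℝ) satisfy S² − S + I = 0 and T² − T + I = 0, and let C be an m×n matrix with C − TCS ≠ 0. Then the twisted 2-cocycle φ(x₁,x₂) = C(x₁ − x₂) of the Alexander quandle (ℝⁿ, S) with coefficients in (ℝᵐ, T) evaluates nontrivially on a twisted 2-cycle; concretely, for the 2-chain w = (u₀,v₀) + T(u₁,v₁) with u₁ = v₀ and v₁ = Su₀ + (I−S)v₀, the boundary ∂w = 0 and φ(w) = (C − TCS)(u₀ − v₀), which is nonzero for suitable u₀, v₀. Hence the second continuous twisted cohomology group H²_TC((ℝⁿ,S), (ℝᵐ,T)) is nonzero. -/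
/-- Boundary of a twisted 2-chain for the Alexander quandle `(ℝⁿ,S)` with
coefficients in `(ℝᵐ,T)`: chains are free modules on pairs of points with matrix
coefficients recording powers of `T`, and `∂(u,v) = T(u) + (I−T)(v) − (Su+(I−S)v)`
extended linearly over the coefficients. -/
noncomputable def alexBoundary2 {n m : ℕ}
    (S : Matrix (Fin n) (Fin n) ℝ) (T : Matrix (Fin m) (Fin m) ℝ)
    (c : ((Fin n → ℝ) × (Fin n → ℝ)) →₀ Matrix (Fin m) (Fin m) ℝ) :
    (Fin n → ℝ) →₀ Matrix (Fin m) (Fin m) ℝ :=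
  c.sum fun p P =>
    Finsupp.single p.1 (P * T) + Finsupp.single p.2 (P * (1 - T))
      - Finsupp.single (S.mulVec p.1 + (1 - S).mulVec p.2) P

/-- Evaluation (Kronecker pairing) of the 2-cocycle `φ(u,v) = C(u−v)` on a 2-chain. -/
noncomputable def alexEval2 {n m : ℕ} (C : Matrix (Fin m) (Fin n) ℝ)
    (c : ((Fin n → ℝ) × (Fin n → ℝ)) →₀ Matrix (Fin m) (Fin m) ℝ) :
    Fin m → ℝ :=
  c.sum fun p P => P.mulVec (C.mulVec (p.1 - p.2))

/-- If `S² − S + I = 0`, `T² − T + I = 0` and `C − TCS ≠ 0`, then the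
continuous twisted 2-cocycle `φ(x₁,x₂) = C(x₁−x₂)` pairs nontrivially with a
twisted 2-cycle `w = (u₀,v₀) + T(u₁,v₁)` (where `u₁ = v₀`, `v₁ = Su₀ + (I−S)v₀`),
so `H²_TC((ℝⁿ,S),(ℝᵐ,T)) ≠ 0`: `φ` is not the coboundary of any continuous map. -/
theorem second_continuous_cohomology_nonzero_case_i
    (n m : ℕ)
    (S : Matrix (Fin n) (Fin n) ℝ) (T : Matrix (Fin m) (Fin m) ℝ)
    (hS : IsUnit S) (hT : IsUnit T)
    (hSeq : S ^ 2 - S + 1 = 0) (hTeq : T ^ 2 - T + 1 = 0)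
    (C : Matrix (Fin m) (Fin n) ℝ) (hC : C - T * C * S ≠ 0)
    (op : (Fin n → ℝ) → (Fin n → ℝ) → (Fin n → ℝ))
    (hop : ∀ x y, op x y = S.mulVec x + (1 - S).mulVec y)
    (φ : (Fin n → ℝ) → (Fin n → ℝ) → (Fin m → ℝ))
    (hφ : ∀ x y, φ x y = C.mulVec (x - y)) :
    -- w is a 2-cycle and φ(w) = (C − TCS)(u₀ − v₀)
    (∀ u₀ v₀ : Fin n → ℝ,
      alexBoundary2 S T
          (Finsupp.single (u₀, v₀) 1
            + Finsupp.single (v₀, S.mulVec u₀ + (1 - S).mulVec v₀) T) = 0 ∧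
      alexEval2 C
          (Finsupp.single (u₀, v₀) 1
            + Finsupp.single (v₀, S.mulVec u₀ + (1 - S).mulVec v₀) T) =
        (C - T * C * S).mulVec (u₀ - v₀)) ∧
    -- there are u₀, v₀ making this value nonzero
    (∃ u₀ v₀ : Fin n → ℝ, (C - T * C * S).mulVec (u₀ - v₀) ≠ 0) ∧
    -- hence φ is not the coboundary of any continuous 1-cochain
    (¬ ∃ g : (Fin n → ℝ) → (Fin m → ℝ), Continuous g ∧
      ∀ x y, φ x y = T.mulVec (g x) - g (op x y) - T.mulVec (g y) + g y) := by
  have hT2 : T * T = T - 1 := by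
    calc T * T = T ^ 2 - T + 1 + T - 1 := by rw [pow_two]; abel
    _ = T - 1 := by rw [hTeq]; abel
  have hS2 : S * S = S - 1 := by
    calc S * S = S ^ 2 - S + 1 + S - 1 := by rw [pow_two]; abel
    _ = S - 1 := by rw [hSeq]; abel
  have hkey : ∀ u₀ v₀ : Fin n → ℝ,
      S.mulVec v₀ + (1 - S).mulVec (S.mulVec u₀ + (1 - S).mulVec v₀) = u₀ := by
    intro u₀ v₀
    rw [Matrix.mulVec_add, Matrix.mulVec_mulVec, Matrix.mulVec_mulVec]
    have h1 : (1 - S) * S = 1 := by rw [sub_mul, one_mul, hS2]; abel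
    have h2 : (1 - S) * (1 - S) = -S := by
      rw [mul_sub, mul_one, sub_mul, one_mul, hS2]; abel
    rw [h1, h2, Matrix.one_mulVec, Matrix.neg_mulVec]
    abel
  have hval : ∀ u₀ v₀ : Fin n → ℝ,
      C.mulVec (u₀ - v₀)
        + T.mulVec (C.mulVec (v₀ - (S.mulVec u₀ + (1 - S).mulVec v₀))) =
      (C - T * C * S).mulVec (u₀ - v₀) := by
    intro u₀ v₀
    have e1 : v₀ - (S.mulVec u₀ + (1 - S).mulVec v₀) = S.mulVec v₀ - S.mulVec u₀ := by
      rw [Matrix.sub_mulVec, Matrix.one_mulVec]; abel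
    rw [e1]
    simp only [Matrix.mulVec_sub, Matrix.sub_mulVec, ← Matrix.mulVec_mulVec]
    abel
  refine ⟨fun u₀ v₀ => ⟨?_, ?_⟩, ?_, ?_⟩
  · unfold alexBoundary2
    rw [Finsupp.sum_add_index (by intro p _; simp)
        (by intro p _ P Q; simp only [add_mul, Finsupp.single_add]; abel),
      Finsupp.sum_single_index (by simp), Finsupp.sum_single_index (by simp)]
    simp only [one_mul, hkey]
    have hT3 : T * (1 - T) = 1 := by rw [mul_sub, mul_one, hT2]; abel
    rw [hT3, hT2]
    have h1 : Finsupp.single v₀ ((1 : Matrix (Fin m) (Fin m) ℝ) - T)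
        = -Finsupp.single v₀ (T - 1) := by
      rw [← Finsupp.single_neg, neg_sub]
    rw [h1]
    abel
  · unfold alexEval2
    rw [Finsupp.sum_add_index (by intro p _; simp)
        (by intro p _ P Q; rw [Matrix.add_mulVec]),
      Finsupp.sum_single_index (by simp), Finsupp.sum_single_index (by simp)]
    simpa [Matrix.one_mulVec] using hval u₀ v₀
  · obtain ⟨i, j, hij⟩ : ∃ i j, (C - T * C * S) i j ≠ 0 := by
      by_contra h
      push_neg at h
      exact hC (by ext i j; exact h i j)
    refine ⟨Pi.single j 1, 0, fun h => hij ?_⟩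
    have := congrFun h i
    simpa [Matrix.mulVec_single] using this
  · rintro ⟨g, -, hg⟩
    obtain ⟨i, j, hij⟩ : ∃ i j, (C - T * C * S) i j ≠ 0 := by
      by_contra h
      push_neg at h
      exact hC (by ext i j; exact h i j)
    set u₀ : Fin n → ℝ := Pi.single j 1 with hu
    set v₀ : Fin n → ℝ := 0 with hv
    set v₁ : Fin n → ℝ := S.mulVec u₀ + (1 - S).mulVec v₀ with hv1
    have h1 := hg u₀ v₀
    have h2 := hg v₀ v₁
    have hop1 : op u₀ v₀ = v₁ := by rw [hop]
    have hop2 : op v₀ v₁ = u₀ := by rw [hop, hv1]; exact hkey u₀ v₀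
    rw [hop1, hφ] at h1
    rw [hop2, hφ] at h2
    have hzero : C.mulVec (u₀ - v₀) + T.mulVec (C.mulVec (v₀ - v₁)) = 0 := by
      rw [h1, h2]
      have hTT : ∀ x : Fin m → ℝ, T.mulVec (T.mulVec x) = T.mulVec x - x := by
        intro x
        rw [Matrix.mulVec_mulVec, hT2, Matrix.sub_mulVec, Matrix.one_mulVec]
      simp only [Matrix.mulVec_sub, Matrix.mulVec_add, hTT]
      abel
    rw [hv1, hval u₀ v₀] at hzero
    apply hij
    have := congrFun hzero i
    simpa [hu, hv, Matrix.mulVec_single] using this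
end

section
/- Let T = −I on ℝᵐ and let S ∈ GL_n(ℝ) have eigenvalue −1 with eigenvector u₀. Choose an m×n matrix C with Cu₀ ≠ 0. Then the twisted 2-cocycle φ(x₁,x₂) = C(x₁−x₂) of the Alexander quandle (ℝⁿ,S) with coefficients in (ℝᵐ,−I) is nontrivial: the 2-chain w = (u₀, 0) + T(−u₀, 0) is a 2-cycle, and φ(w) = 2Cu₀ ≠ 0; hence H²_TC((ℝⁿ,S),(ℝᵐ,−I)) ≠ 0. -/
/-- With `T = −I` on `ℝᵐ` and `S` having eigenvalue `−1` with
eigenvector `u₀`, and `C` an `m×n` matrix with `Cu₀ ≠ 0`, the twisted 2-cocycle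
`φ(x₁,x₂) = C(x₁−x₂)` is nontrivial: `w = (u₀,0) + T(−u₀,0)` is a 2-cycle with
`φ(w) = 2Cu₀ ≠ 0`; hence `H²_TC((ℝⁿ,S),(ℝᵐ,−I)) ≠ 0`. -/
theorem second_continuous_cohomology_nonzero_case_ii
    (n m : ℕ)
    (S : Matrix (Fin n) (Fin n) ℝ) (hS : IsUnit S)
    (T : Matrix (Fin m) (Fin m) ℝ) (hT : T = -1)
    (u₀ : Fin n → ℝ) (hu₀ : u₀ ≠ 0) (hSu₀ : S.mulVec u₀ = -u₀)
    (C : Matrix (Fin m) (Fin n) ℝ) (hC : C.mulVec u₀ ≠ 0)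
    (op : (Fin n → ℝ) → (Fin n → ℝ) → (Fin n → ℝ))
    (hop : ∀ x y, op x y = S.mulVec x + (1 - S).mulVec y)
    (φ : (Fin n → ℝ) → (Fin n → ℝ) → (Fin m → ℝ))
    (hφ : ∀ x y, φ x y = C.mulVec (x - y)) :
    -- w is a 2-cycle
    alexBoundary2 S T
        (Finsupp.single (u₀, (0 : Fin n → ℝ)) 1
          + Finsupp.single (-u₀, (0 : Fin n → ℝ)) T) = 0 ∧
    -- φ(w) = 2Cu₀ ≠ 0
    alexEval2 C
        (Finsupp.single (u₀, (0 : Fin n → ℝ)) 1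
          + Finsupp.single (-u₀, (0 : Fin n → ℝ)) T) = (2 : ℝ) • C.mulVec u₀ ∧
    (2 : ℝ) • C.mulVec u₀ ≠ 0 ∧
    -- hence φ is not the coboundary of any continuous 1-cochain
    ¬ ∃ g : (Fin n → ℝ) → (Fin m → ℝ), Continuous g ∧
      ∀ x y, φ x y = T.mulVec (g x) - g (op x y) - T.mulVec (g y) + g y := by
  have hadd : ∀ (p : (Fin n → ℝ) × (Fin n → ℝ)) (P Q : Matrix (Fin m) (Fin m) ℝ),
      (Finsupp.single p.1 ((P + Q) * T) + Finsupp.single p.2 ((P + Q) * (1 - T))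
        - Finsupp.single (S.mulVec p.1 + (1 - S).mulVec p.2) (P + Q))
      = (Finsupp.single p.1 (P * T) + Finsupp.single p.2 (P * (1 - T))
        - Finsupp.single (S.mulVec p.1 + (1 - S).mulVec p.2) P)
      + (Finsupp.single p.1 (Q * T) + Finsupp.single p.2 (Q * (1 - T))
        - Finsupp.single (S.mulVec p.1 + (1 - S).mulVec p.2) Q) := by
    intro p P Q
    simp [add_mul, Finsupp.single_add]
    abel
  refine ⟨?_, ?_, ?_, ?_⟩
  · unfold alexBoundary2
    rw [Finsupp.sum_add_index' (by intro a; simp) hadd,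
      Finsupp.sum_single_index (by simp), Finsupp.sum_single_index (by simp)]
    simp only [hT, hSu₀, Matrix.mulVec_neg, Matrix.mulVec_zero, add_zero, neg_neg,
      one_mul, neg_mul, neg_neg, mul_one, neg_mul_neg, Finsupp.single_neg, sub_neg_eq_add]
    abel
  · unfold alexEval2
    rw [Finsupp.sum_add_index' (by intro a; simp [Matrix.zero_mulVec])
        (by intro a P Q; rw [Matrix.add_mulVec]),
      Finsupp.sum_single_index (by simp [Matrix.zero_mulVec]),
      Finsupp.sum_single_index (by simp [Matrix.zero_mulVec])]
    simp only [hT, sub_zero, Matrix.mulVec_neg, Matrix.one_mulVec, Matrix.neg_mulVec, neg_neg]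
    rw [two_smul]
  · exact smul_ne_zero two_ne_zero hC
  · rintro ⟨g, -, hg⟩
    have h1 := hg u₀ 0
    have h2 := hg (-u₀) 0
    rw [hφ, hop] at h1 h2
    simp only [hT, hSu₀, Matrix.mulVec_neg, Matrix.mulVec_zero, add_zero, neg_neg,
      Matrix.neg_mulVec, Matrix.one_mulVec, sub_zero, sub_neg_eq_add] at h1 h2
    have h3 : (2:ℝ) • C.mulVec u₀ = 0 := by
      rw [two_smul]; linear_combination h1 - h2
    exact hC ((smul_eq_zero.mp h3).resolve_left two_ne_zero)
end

section
/- Let p : E → X be a surjective quandle homomorphism of quandles that is a principal A-bundle for an abelian group A acting freely and transitively on fibers, satisfying (x*y)·a = (x·a)*(y·a) and (x·a)*y = (x*y)·a for all x,y ∈ E, a ∈ A. Let s : X → E be a set-theoretic section of p. Then for all x,y ∈ X there exists a unique a ∈ A with s(x)*s(y) = s(x*y)·a; denoting it φ(x,y), the function φ : X × X → A satisfies the untwisted quandle 2-cocycle conditions: φ(x,x) = 0 (identity of A) and φ(x*y, z)·φ(x,y) = φ(x*z, y*z)·φ(x,z) for all x,y,z ∈ X. -/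
/-- For a principal abelian quandle extension `p : E → X` by `A` with a
set-theoretic section `s`, there is for all `x, y` a unique `a ∈ A` with
`s(x)*s(y) = s(x*y)·a`; the resulting function `φ : X × X → A` satisfies the
untwisted quandle 2-cocycle conditions `φ(x,x) = 1` and
`φ(x*y,z)·φ(x,y) = φ(x*z,y*z)·φ(x,z)` (written multiplicatively). -/
theorem principal_bundle_two_cocycle
    (E X A : Type*) [CommGroup A]
    (opE : E → E → E) (opX : X → X → X)
    -- E and X are quandles
    (hEidem : ∀ x, opE x x = x)
    (hEdist : ∀ x y z, opE (opE x y) z = opE (opE x z) (opE y z))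
    (hEbij : ∀ y, Function.Bijective fun x => opE x y)
    (hXidem : ∀ x, opX x x = x)
    (hXdist : ∀ x y z, opX (opX x y) z = opX (opX x z) (opX y z))
    (hXbij : ∀ y, Function.Bijective fun x => opX x y)
    -- p is a surjective quandle homomorphism
    (p : E → X) (hpsurj : Function.Surjective p)
    (hphom : ∀ x y : E, p (opE x y) = opX (p x) (p y))
    -- right action of A on E
    (act : E → A → E)
    (hact1 : ∀ e : E, act e 1 = e)
    (hactmul : ∀ (e : E) (a b : A), act (act e a) b = act e (a * b))
    -- the action is fiber preserving, free and transitive on fibers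
    (hfiber : ∀ (e : E) (a : A), p (act e a) = p e)
    (hft : ∀ e e' : E, p e = p e' → ∃! a : A, act e a = e')
    -- compatibility with the quandle operation
    (hcomp1 : ∀ (x y : E) (a : A), act (opE x y) a = opE (act x a) (act y a))
    (hcomp2 : ∀ (x y : E) (a : A), opE (act x a) y = act (opE x y) a)
    -- set-theoretic section
    (s : X → E) (hs : ∀ x : X, p (s x) = x) :
    (∀ x y : X, ∃! a : A, opE (s x) (s y) = act (s (opX x y)) a) ∧
    (∀ φ : X → X → A,
      (∀ x y : X, opE (s x) (s y) = act (s (opX x y)) (φ x y)) →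
      (∀ x : X, φ x x = 1) ∧
      (∀ x y z : X,
        φ (opX x y) z * φ x y = φ (opX x z) (opX y z) * φ x z)) := by
  have free : ∀ (e : E) (a b : A), act e a = act e b → a = b := by
    intro e a b h
    have h2 := hft e (act e b) (hfiber e b).symm
    exact h2.unique h rfl
  have opinv : ∀ (u v : E) (b : A), opE u (act v b) = opE u v := by
    intro u v b
    have h1 := hcomp1 (act u b⁻¹) v b
    rw [hactmul, inv_mul_cancel, hact1] at h1
    rw [← h1, hcomp2, hactmul, inv_mul_cancel, hact1]
  constructor
  · intro x y
    have h : p (s (opX x y)) = p (opE (s x) (s y)) := by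
      rw [hphom, hs, hs, hs]
    obtain ⟨a, ha, hu⟩ := hft _ _ h
    exact ⟨a, ha.symm, fun b hb => hu b hb.symm⟩
  · intro φ hφ
    constructor
    · intro x
      apply free (s x)
      have h := hφ x x
      rw [hXidem, hEidem] at h
      rw [← h, hact1]
    · intro x y z
      apply free (s (opX (opX x y) z))
      have key : act (s (opX (opX x y) z)) (φ (opX x y) z * φ x y)
          = opE (opE (s x) (s y)) (s z) := by
        rw [← hactmul, ← hφ, ← hcomp2, ← hφ]
      have key2 : act (s (opX (opX x y) z)) (φ (opX x z) (opX y z) * φ x z)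
          = opE (opE (s x) (s z)) (opE (s y) (s z)) := by
        rw [hXdist, ← hactmul, ← hφ, ← hcomp2, ← hφ, hφ y z, opinv]
      rw [key, key2, hEdist]
end

section
/- Let S ∈ GL_n(ℝ) and T ∈ GL_m(ℝ) with I−S and I−T invertible, giving Alexander quandle structures x*y = Sx+(I−S)y on ℝⁿ and a*b = Ta+(I−T)b on ℝᵐ. If F : ℝⁿ → ℝᵐ is a continuous quandle homomorphism with F(0) = 0, then F is ℝ-linear and satisfies FS = TF. -/
/-- Let `S ∈ GL_n(ℝ)`, `T ∈ GL_m(ℝ)` with `I−S` and `I−T` invertible,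
giving Alexander quandle structures on `ℝⁿ` and `ℝᵐ`. A continuous quandle
homomorphism `F : ℝⁿ → ℝᵐ` with `F(0) = 0` is ℝ-linear and satisfies `FS = TF`. -/
theorem continuous_quandle_hom_is_linear
    (n m : ℕ)
    (S : Matrix (Fin n) (Fin n) ℝ) (T : Matrix (Fin m) (Fin m) ℝ)
    (hS : IsUnit S) (hT : IsUnit T)
    (hS' : IsUnit (1 - S)) (hT' : IsUnit (1 - T))
    (F : (Fin n → ℝ) → (Fin m → ℝ))
    (hFcont : Continuous F) (hF0 : F 0 = 0)
    (hFhom : ∀ x y : Fin n → ℝ,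
      F (S.mulVec x + (1 - S).mulVec y) = T.mulVec (F x) + (1 - T).mulVec (F y)) :
    IsLinearMap ℝ F ∧ ∀ x : Fin n → ℝ, F (S.mulVec x) = T.mulVec (F x) := by
  have hFS : ∀ x : Fin n → ℝ, F (S.mulVec x) = T.mulVec (F x) := by
    intro x
    have := hFhom x 0
    simpa [Matrix.mulVec_zero, hF0] using this
  have hF1S : ∀ y : Fin n → ℝ, F ((1 - S).mulVec y) = (1 - T).mulVec (F y) := by
    intro y
    have := hFhom 0 y
    simpa [Matrix.mulVec_zero, hF0] using this
  -- surjectivity of u ↦ S.mulVec u and u ↦ (1-S).mulVec u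
  have hsurj : ∀ (A : Matrix (Fin n) (Fin n) ℝ), IsUnit A →
      ∀ u : Fin n → ℝ, ∃ x, A.mulVec x = u := by
    intro A hA u
    refine ⟨(hA.unit⁻¹).val.mulVec u, ?_⟩
    rw [Matrix.mulVec_mulVec]
    have : A * (hA.unit⁻¹).val = 1 := hA.mul_val_inv
    rw [this, Matrix.one_mulVec]
  have hadd : ∀ u v : Fin n → ℝ, F (u + v) = F u + F v := by
    intro u v
    obtain ⟨x, hx⟩ := hsurj S hS u
    obtain ⟨y, hy⟩ := hsurj (1 - S) hS' v
    calc F (u + v) = F (S.mulVec x + (1 - S).mulVec y) := by rw [hx, hy]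
      _ = T.mulVec (F x) + (1 - T).mulVec (F y) := hFhom x y
      _ = F (S.mulVec x) + F ((1 - S).mulVec y) := by rw [hFS, hF1S]
      _ = F u + F v := by rw [hx, hy]
  let f : (Fin n → ℝ) →+ (Fin m → ℝ) := AddMonoidHom.mk' F hadd
  have hsmul : ∀ (c : ℝ) (u : Fin n → ℝ), F (c • u) = c • F u := by
    intro c u
    exact map_real_smul f hFcont c u
  exact ⟨⟨hadd, hsmul⟩, hFS⟩
end

section
/- Let (ℝⁿ, S) and (ℝⁿ, T) be indecomposable Alexander quandles (i.e., I−S and I−T are invertible, S,T ∈ GL_n(ℝ)). If F : ℝⁿ → ℝⁿ is a continuous quandle isomorphism with F(0) = 0, then F is linear and S and T are similar matrices: T = F S F⁻¹. -/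
/-- Let `(ℝⁿ,S)` and `(ℝⁿ,T)` be indecomposable Alexander quandles
(`S, T ∈ GL_n(ℝ)`, `I−S` and `I−T` invertible). If `F : ℝⁿ → ℝⁿ` is a continuous
quandle isomorphism with `F(0) = 0`, then `F` is linear and `S` and `T` are
similar via `F`: `T = F S F⁻¹`, i.e. `F ∘ S = T ∘ F` with `F` invertible. -/
theorem continuous_quandle_iso_gives_similarity
    (n : ℕ)
    (S T : Matrix (Fin n) (Fin n) ℝ)
    (hS : IsUnit S) (hT : IsUnit T)
    (hS' : IsUnit (1 - S)) (hT' : IsUnit (1 - T))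
    (F : (Fin n → ℝ) → (Fin n → ℝ))
    (hFcont : Continuous F) (hF0 : F 0 = 0)
    (hFbij : Function.Bijective F)
    (hFhom : ∀ x y : Fin n → ℝ,
      F (S.mulVec x + (1 - S).mulVec y) = T.mulVec (F x) + (1 - T).mulVec (F y)) :
    IsLinearMap ℝ F ∧ ∀ x : Fin n → ℝ, T.mulVec (F x) = F (S.mulVec x) := by
  have hFS : ∀ x, F (S.mulVec x) = T.mulVec (F x) := by
    intro x
    have h := hFhom x 0
    simpa [Matrix.mulVec_zero, hF0] using h
  have hF1S : ∀ y, F ((1 - S).mulVec y) = (1 - T).mulVec (F y) := by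
    intro y
    have h := hFhom 0 y
    simpa [Matrix.mulVec_zero, hF0] using h
  have hSdet : IsUnit S.det := (Matrix.isUnit_iff_isUnit_det S).mp hS
  have hS'det : IsUnit (1 - S).det := (Matrix.isUnit_iff_isUnit_det _).mp hS'
  have hadd : ∀ u v, F (u + v) = F u + F v := by
    intro u v
    have h1 : S.mulVec (S⁻¹.mulVec u) = u := by
      rw [Matrix.mulVec_mulVec, Matrix.mul_nonsing_inv _ hSdet, Matrix.one_mulVec]
    have h2 : (1 - S).mulVec ((1 - S)⁻¹.mulVec v) = v := by
      rw [Matrix.mulVec_mulVec, Matrix.mul_nonsing_inv _ hS'det, Matrix.one_mulVec]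
    calc F (u + v)
        = F (S.mulVec (S⁻¹.mulVec u) + (1 - S).mulVec ((1 - S)⁻¹.mulVec v)) := by
          rw [h1, h2]
      _ = T.mulVec (F (S⁻¹.mulVec u)) + (1 - T).mulVec (F ((1 - S)⁻¹.mulVec v)) :=
          hFhom _ _
      _ = F (S.mulVec (S⁻¹.mulVec u)) + F ((1 - S).mulVec ((1 - S)⁻¹.mulVec v)) := by
          rw [hFS, hF1S]
      _ = F u + F v := by rw [h1, h2]
  refine ⟨⟨hadd, fun c x => ?_⟩, fun x => (hFS x).symm⟩
  exact ((AddMonoidHom.mk' F hadd).toRealLinearMap hFcont).map_smul c x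
end
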